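/- arXiv:2106.09675 — 2 statements merged into one kernel-verified Lean document; each statement's English description precedes it below -/
import Mathlib

section
/- Greedy optimality for the trace objective (Proposition, Appendix A): For every dimension d, every weight vector p : Fin d → ℝ with pᵢ ≥ 0 for all i, every regularizer λ > 0, and every batch size B ∈ ℕ, any greedy sequence n⁽⁰⁾, n⁽¹⁾, …, n⁽ᴮ⁾ satisfies Val(n⁽ᴮ⁾) = min { Val(n) : n : Fin d → ℕ, Σᵢ nᵢ ≤ B }. -/
/-!
`Val` is a separable sum `∑ i, f i (n i)` of functions `f i k = pᵢ / (k + λ)` that are convex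
(nondecreasing forward differences) and antitone on `ℕ`. For convex separable objectives the greedy
point after `t` steps minimizes over all points of total `t`: a competitor of total `t + 1`
exceeds the greedy point in some coordinate `j`; removing one unit there gives a competitor of
total `t`, whose `j`-increment is, by convexity, at least the greedy one. As the `f i` are
antitone, the greedy values decrease with `t`, so `n⁽ᴮ⁾` also beats every point of total `≤ B`.
-/

/-- `Val n = ∑ i, p i / (n i + λ)`, the trace objective in the orthonormal case. -/
noncomputable def traceVal (d : ℕ) (p : Fin d → ℝ) (lam : ℝ) (n : Fin d → ℕ) : ℝ :=
  ∑ i, p i / ((n i : ℝ) + lam)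

open Finset Function

lemma sum_apply_update_add {ι M : Type*} [Fintype ι] [DecidableEq ι] [AddCommMonoid M]
    (f : ι → ℕ → M) (n : ι → ℕ) (j : ι) (v : ℕ) :
    ∑ i, f i (update n j v i) + f j (n j) = ∑ i, f i (n i) + f j v := by
  simp_rw [apply_update (fun i => f i) n j v, sum_update_of_mem (mem_univ j),
    ← add_sum_erase univ (fun i => f i (n i)) (mem_univ j), sdiff_singleton_eq_erase]
  abel

section Greedy

variable {ι : Type*} [Fintype ι] [DecidableEq ι] {f : ι → ℕ → ℝ}

def IsGreedy (f : ι → ℕ → ℝ) (g : ℕ → ι → ℕ) (T : ℕ) : Prop :=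
  g 0 = 0 ∧ ∀ t < T, ∃ i, (∀ j, fwdDiff 1 (f i) (g t i) ≤ fwdDiff 1 (f j) (g t j)) ∧
    g (t + 1) = update (g t) i (g t i + 1)

lemma sum_update_succ (n : ι → ℕ) (j : ι) :
    ∑ i, update n j (n j + 1) i = ∑ i, n i + 1 := by
  have := sum_apply_update_add (fun _ => id) n j (n j + 1)
  simp only [id] at this
  omega

lemma sum_apply_update_succ (n : ι → ℕ) (j : ι) :
    ∑ i, f i (update n j (n j + 1) i) = ∑ i, f i (n i) + fwdDiff 1 (f j) (n j) := by
  have := sum_apply_update_add f n j (n j + 1)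
  rw [fwdDiff]
  linarith

lemma isMinOn_update_succ (hf : ∀ i, Monotone (fwdDiff 1 (f i))) {n : ι → ℕ} {i : ι}
    (hn : IsMinOn (fun m => ∑ k, f k (m k)) {m | ∑ k, m k = ∑ k, n k} n)
    (hi : ∀ j, fwdDiff 1 (f i) (n i) ≤ fwdDiff 1 (f j) (n j)) :
    IsMinOn (fun m => ∑ k, f k (m k)) {m | ∑ k, m k = ∑ k, n k + 1}
      (update n i (n i + 1)) := by
  refine isMinOn_iff.mpr fun m (hm : ∑ k, m k = ∑ k, n k + 1) => ?_
  obtain ⟨j, -, hj⟩ := exists_lt_of_sum_lt (s := univ) (f := n) (g := m) (by omega)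
  obtain ⟨c, hc⟩ : ∃ c, m j = c + 1 := ⟨m j - 1, by omega⟩
  set m' := update m j c
  have hm' : update m' j (m' j + 1) = m := by simp [m', ← hc]
  have hsum : ∑ k, m' k = ∑ k, n k := by
    have := sum_update_succ m' j
    rw [hm'] at this
    omega
  rw [← hm', sum_apply_update_succ, sum_apply_update_succ]
  have hopt : ∑ k, f k (n k) ≤ ∑ k, f k (m' k) := isMinOn_iff.mp hn m' hsum
  have hmono : fwdDiff 1 (f j) (n j) ≤ fwdDiff 1 (f j) (m' j) :=
    hf j (by simp [m']; omega)
  linarith [hi j]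

lemma IsGreedy.sum_eq {g : ℕ → ι → ℕ} {T : ℕ} (hg : IsGreedy f g T) :
    ∀ t ≤ T, ∑ i, g t i = t := by
  intro t
  induction t with
  | zero => simp [hg.1]
  | succ t ih =>
    intro ht
    obtain ⟨i, -, hi⟩ := hg.2 t ht
    rw [hi, sum_update_succ, ih (by omega)]

lemma IsGreedy.isMinOn (hf : ∀ i, Monotone (fwdDiff 1 (f i))) {g : ℕ → ι → ℕ} {T : ℕ}
    (hg : IsGreedy f g T) :
    ∀ t ≤ T, IsMinOn (fun m => ∑ k, f k (m k)) {m | ∑ k, m k = t} (g t) := by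
  intro t
  induction t with
  | zero =>
    refine fun _ => isMinOn_iff.mpr fun m (hm : ∑ k, m k = 0) => le_of_eq ?_
    have : m = g 0 := by
      rw [hg.1]
      funext k
      exact sum_eq_zero_iff.mp hm k (mem_univ k)
    rw [this]
  | succ t ih =>
    intro ht
    obtain ⟨i, hi, hstep⟩ := hg.2 t ht
    have h := isMinOn_update_succ hf (by simpa [hg.sum_eq t (by omega)] using ih (by omega)) hi
    rwa [← hstep, hg.sum_eq t (by omega)] at h

lemma IsGreedy.value_antitone (hf : ∀ i, Antitone (f i)) {g : ℕ → ι → ℕ} {T : ℕ}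
    (hg : IsGreedy f g T) {s t : ℕ} (hst : s ≤ t) (ht : t ≤ T) :
    ∑ k, f k (g t k) ≤ ∑ k, f k (g s k) := by
  induction t, hst using Nat.le_induction with
  | base => rfl
  | succ t hst ih =>
    obtain ⟨i, -, hi⟩ := hg.2 t ht
    rw [hi, sum_apply_update_succ]
    have : fwdDiff 1 (f i) (g t i) ≤ 0 := sub_nonpos.mpr (hf i (Nat.le_succ _))
    linarith [ih (by omega)]

lemma IsGreedy.isLeast (hconv : ∀ i, Monotone (fwdDiff 1 (f i))) (hanti : ∀ i, Antitone (f i))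
    {g : ℕ → ι → ℕ} {T : ℕ} (hg : IsGreedy f g T) :
    IsLeast {v | ∃ n : ι → ℕ, ∑ i, n i ≤ T ∧ v = ∑ i, f i (n i)} (∑ i, f i (g T i)) := by
  refine ⟨⟨g T, (hg.sum_eq T le_rfl).le, rfl⟩, ?_⟩
  rintro v ⟨n, hn, rfl⟩
  calc ∑ i, f i (g T i) ≤ ∑ i, f i (g (∑ k, n k) i) := hg.value_antitone hanti hn le_rfl
    _ ≤ ∑ i, f i (n i) := hg.isMinOn hconv _ hn rfl

end Greedy

lemma monotone_fwdDiff_div_natCast_add {c lam : ℝ} (hc : 0 ≤ c) (hlam : 0 < lam) :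
    Monotone (fwdDiff 1 fun k : ℕ => c / (k + lam)) := by
  refine monotone_nat_of_le_succ fun k => ?_
  simp only [fwdDiff]
  push_cast
  have hk : 0 < (k : ℝ) + lam := by positivity
  have : c / (k + 1 + 1 + lam) - c / (k + 1 + lam) - (c / (k + 1 + lam) - c / (k + lam))
      = 2 * c / ((k + lam) * (k + 1 + lam) * (k + 2 + lam)) := by
    field_simp
    ring
  have : 0 ≤ 2 * c / ((k + lam) * (k + 1 + lam) * (k + 2 + lam)) := by positivity
  linarith

lemma antitone_div_natCast_add {c lam : ℝ} (hc : 0 ≤ c) (hlam : 0 < lam) :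
    Antitone fun k : ℕ => c / (k + lam) :=
  fun a b hab => div_le_div_of_nonneg_left hc (by positivity) (by gcongr)

/-- Greedy optimality for the trace objective: any greedy sequence
`n⁽⁰⁾, …, n⁽ᴮ⁾` (starting at `0` and at each step adding one unit to a coordinate
minimizing the marginal change `pᵢ/(nᵢ+1+λ) − pᵢ/(nᵢ+λ)`) achieves the minimum of
`Val` over all `n : Fin d → ℕ` with `∑ᵢ nᵢ ≤ B`. -/
theorem greedy_trace_optimal
    (d : ℕ) (p : Fin d → ℝ) (hp : ∀ i, 0 ≤ p i) (lam : ℝ) (hlam : 0 < lam)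
    (B : ℕ) (gseq : ℕ → (Fin d → ℕ))
    (h0 : gseq 0 = 0)
    (hstep : ∀ t < B, ∃ i : Fin d,
      (∀ j : Fin d,
        p i / ((gseq t i : ℝ) + 1 + lam) - p i / ((gseq t i : ℝ) + lam)
          ≤ p j / ((gseq t j : ℝ) + 1 + lam) - p j / ((gseq t j : ℝ) + lam)) ∧
      gseq (t + 1) = Function.update (gseq t) i (gseq t i + 1)) :
    IsLeast {v : ℝ | ∃ n : Fin d → ℕ, (∑ i, n i) ≤ B ∧ v = traceVal d p lam n}
      (traceVal d p lam (gseq B)) := by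
  have hg : IsGreedy (fun i k => p i / ((k : ℝ) + lam)) gseq B := by
    refine ⟨h0, fun t ht => ?_⟩
    simpa only [fwdDiff, Nat.cast_add, Nat.cast_one] using hstep t ht
  exact hg.isLeast (fun i => monotone_fwdDiff_div_natCast_add (hp i) hlam)
    (fun i => antitone_div_natCast_add (hp i) hlam)
end

section
/- Inductive invariant of the greedy algorithm: For every dimension d, every weight vector p : Fin d → ℝ with pᵢ ≥ 0 for all i, every λ > 0, every batch size B ∈ ℕ, any greedy sequence n⁽⁰⁾, …, n⁽ᴮ⁾, and every t ≤ B, the prefix n⁽ᵗ⁾ is optimal for budget t: Val(n⁽ᵗ⁾) = min { Val(n) : n : Fin d → ℕ, Σᵢ nᵢ ≤ t }. -/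
open Finset Function

lemma Fintype.sum_update_add_self {ι M : Type*} [Fintype ι] [DecidableEq ι] [AddCommMonoid M]
    (f : ι → M) (i : ι) (b : M) :
    ∑ k, update f i b k + f i = ∑ k, f k + b := by
  rw [sum_update_of_mem (mem_univ i), sum_eq_add_sum_sdiff_singleton_of_mem (mem_univ i) f]
  abel

noncomputable def traceGain (q lam : ℝ) (a : ℕ) : ℝ :=
  q / ((a : ℝ) + 1 + lam) - q / ((a : ℝ) + lam)

section

variable {q lam : ℝ}

lemma traceGain_eq_neg_div (hlam : 0 < lam) (a : ℕ) :
    traceGain q lam a = -(q / (((a : ℝ) + lam) * ((a : ℝ) + 1 + lam))) := by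
  unfold traceGain
  have : (0 : ℝ) < a + lam := by positivity
  field_simp
  ring

lemma traceGain_nonpos (hq : 0 ≤ q) (hlam : 0 < lam) (a : ℕ) : traceGain q lam a ≤ 0 := by
  rw [traceGain_eq_neg_div hlam, neg_nonpos]
  positivity

lemma traceGain_monotone (hq : 0 ≤ q) (hlam : 0 < lam) : Monotone (traceGain q lam) := by
  intro a b hab
  rw [traceGain_eq_neg_div hlam, traceGain_eq_neg_div hlam, neg_le_neg_iff]
  gcongr

end

section

variable {d : ℕ} {p : Fin d → ℝ} {lam : ℝ}

lemma traceVal_update_succ (n : Fin d → ℕ) (j : Fin d) :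
    traceVal d p lam (update n j (n j + 1)) = traceVal d p lam n + traceGain (p j) lam (n j) := by
  have hsum := Fintype.sum_update_add_self (fun i ↦ p i / ((n i : ℝ) + lam)) j
    (p j / (((n j + 1 : ℕ) : ℝ) + lam))
  have hupd : (fun i ↦ p i / ((update n j (n j + 1) i : ℝ) + lam)) =
      update (fun i ↦ p i / ((n i : ℝ) + lam)) j (p j / (((n j + 1 : ℕ) : ℝ) + lam)) := by
    funext i
    exact apply_update (fun i (a : ℕ) ↦ p i / ((a : ℝ) + lam)) n j (n j + 1) i
  simp only [traceVal, traceGain, hupd]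
  push_cast at hsum ⊢
  linarith

lemma traceVal_update_succ_le_of_isGreedy (hp : ∀ i, 0 ≤ p i) (hlam : 0 < lam)
    {n : Fin d → ℕ} {s : ℕ} (hn : ∑ i, n i ≤ s)
    (hopt : ∀ m : Fin d → ℕ, ∑ i, m i ≤ s → traceVal d p lam n ≤ traceVal d p lam m)
    {i : Fin d} (hi : ∀ j, traceGain (p i) lam (n i) ≤ traceGain (p j) lam (n j))
    {m : Fin d → ℕ} (hm : ∑ j, m j ≤ s + 1) :
    traceVal d p lam (update n i (n i + 1)) ≤ traceVal d p lam m := by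
  rw [traceVal_update_succ]
  rcases Nat.lt_or_eq_of_le hm with hm | hm
  · have := hopt m (by omega)
    have := traceGain_nonpos (hp i) hlam (n i)
    linarith
  obtain ⟨j, -, hj⟩ := exists_lt_of_sum_lt (hn.trans_lt (by omega : s < ∑ j, m j))
  obtain ⟨k, hk⟩ : ∃ k, m j = n j + k + 1 := ⟨m j - n j - 1, by omega⟩
  have hm'_sum := Fintype.sum_update_add_self m j (n j + k)
  set m' := update m j (n j + k)
  have hm' : update m' j (m' j + 1) = m := by simp [m', ← hk]
  calc traceVal d p lam n + traceGain (p i) lam (n i)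
      ≤ traceVal d p lam m' + traceGain (p j) lam (m' j) := by
        refine add_le_add (hopt m' (by omega)) ((hi j).trans (traceGain_monotone (hp j) hlam ?_))
        simp [m']
    _ = traceVal d p lam m := by rw [← traceVal_update_succ, hm']

end

/-- Inductive invariant of the greedy algorithm: for any greedy sequence
`n⁽⁰⁾, …, n⁽ᴮ⁾` and every `t ≤ B`, the prefix `n⁽ᵗ⁾` is optimal for budget `t`. -/
theorem greedy_trace_invariant
    (d : ℕ) (p : Fin d → ℝ) (hp : ∀ i, 0 ≤ p i) (lam : ℝ) (hlam : 0 < lam)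
    (B : ℕ) (gseq : ℕ → (Fin d → ℕ))
    (h0 : gseq 0 = 0)
    (hstep : ∀ t < B, ∃ i : Fin d,
      (∀ j : Fin d,
        p i / ((gseq t i : ℝ) + 1 + lam) - p i / ((gseq t i : ℝ) + lam)
          ≤ p j / ((gseq t j : ℝ) + 1 + lam) - p j / ((gseq t j : ℝ) + lam)) ∧
      gseq (t + 1) = Function.update (gseq t) i (gseq t i + 1)) :
    ∀ t ≤ B,
      IsLeast {v : ℝ | ∃ n : Fin d → ℕ, (∑ i, n i) ≤ t ∧ v = traceVal d p lam n}
        (traceVal d p lam (gseq t)) := by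
  have hinv : ∀ t ≤ B, ∑ i, gseq t i ≤ t ∧
      ∀ m : Fin d → ℕ, ∑ i, m i ≤ t → traceVal d p lam (gseq t) ≤ traceVal d p lam m := by
    intro t
    induction t with
    | zero =>
      refine fun _ ↦ ⟨by simp [h0], fun m hm ↦ le_of_eq ?_⟩
      have hm0 : m = 0 := funext fun i ↦ sum_eq_zero_iff.mp (Nat.le_zero.mp hm) i (mem_univ i)
      rw [h0, hm0]
    | succ s ih =>
      intro hs
      obtain ⟨i, hi, hupd⟩ := hstep s (by omega)
      obtain ⟨hsum, hopt⟩ := ih (by omega)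
      rw [hupd]
      refine ⟨?_, fun m hm ↦ traceVal_update_succ_le_of_isGreedy hp hlam hsum hopt hi hm⟩
      have := Fintype.sum_update_add_self (gseq s) i (gseq s i + 1)
      omega
  intro t ht
  obtain ⟨hsum, hopt⟩ := hinv t ht
  exact ⟨⟨gseq t, hsum, rfl⟩, by rintro _ ⟨m, hm, rfl⟩; exact hopt m hm⟩
end
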